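/- arXiv:1701.00335 — 4 statements merged into one kernel-verified Lean document; each statement's English description precedes it below -/
import Mathlib

section
/- Fix β > 0. The sequence ξ_β tends to 0 as x → ∞, and consequently ∑_{x=0}^∞ (ξ_β(x) − ξ_β(x+1)) = 1; hence π_β^P(x) := ξ_β(x) − ξ_β(x+1) defines a probability distribution on ℕ. -/
/-- The tail sequence of the invariant distribution `π_β^P` of the mean-field limit
of the Power of Choice policy: `ξ_β(0) = 1` and
`ξ_β(x+1) = (−1 + √(1 + 4β²ξ_β(x)²))/(2β)`. -/
noncomputable def xi (β : ℝ) : ℕ → ℝ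
  | 0 => 1
  | x + 1 => (-1 + Real.sqrt (1 + 4 * β ^ 2 * (xi β x) ^ 2)) / (2 * β)

/-! The map `xiStep β` sends `[0, 1]` into itself and shrinks it by the factor
`2β / (1 + 2β) < 1`, so `0 ≤ ξ_β(x) ≤ (2β / (1 + 2β))ˣ → 0`. The differences
`ξ_β(x) − ξ_β(x+1)` are then nonnegative and their partial sums telescope to
`ξ_β(0) − ξ_β(n) → 1`. -/

theorem hasSum_sub_succ_of_antitone {f : ℕ → ℝ} {l : ℝ} (hf : Antitone f)
    (hl : Filter.Tendsto f Filter.atTop (nhds l)) :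
    HasSum (fun n => f n - f (n + 1)) (f 0 - l) := by
  rw [hasSum_iff_tendsto_nat_of_nonneg fun n => sub_nonneg.2 (hf n.le_succ)]
  simpa only [Finset.sum_range_sub'] using tendsto_const_nhds.sub hl

noncomputable def xiStep (β t : ℝ) : ℝ := (-1 + √(1 + 4 * β ^ 2 * t ^ 2)) / (2 * β)

theorem xi_succ (β : ℝ) (x : ℕ) : xi β (x + 1) = xiStep β (xi β x) := rfl

section

variable {β : ℝ}

theorem two_mul_div_one_add_two_mul_lt_one (hβ : 0 ≤ β) : 2 * β / (1 + 2 * β) < 1 := by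
  rw [div_lt_one (by positivity)]
  linarith

theorem xiStep_nonneg (hβ : 0 ≤ β) (t : ℝ) : 0 ≤ xiStep β t := by
  have : 1 ≤ √(1 + 4 * β ^ 2 * t ^ 2) := Real.one_le_sqrt.2 (by nlinarith [sq_nonneg (β * t)])
  exact div_nonneg (by linarith) (by positivity)

/-- With `S = √(1 + 4β²t²)` one has `(S - 1)(S + 1) = 4β²t²`, and `t(1 + 2β) ≤ 1 + 2βt ≤ S + 1`
for `t ≤ 1`. -/
theorem xiStep_le_mul (hβ : 0 < β) {t : ℝ} (ht₀ : 0 ≤ t) (ht₁ : t ≤ 1) :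
    xiStep β t ≤ 2 * β / (1 + 2 * β) * t := by
  set S := √(1 + 4 * β ^ 2 * t ^ 2)
  have hS_sq : S ^ 2 = 1 + 4 * β ^ 2 * t ^ 2 := Real.sq_sqrt (by positivity)
  have hS_ge : 2 * β * t ≤ S := Real.le_sqrt_of_sq_le (by nlinarith)
  have hS_pos : 0 < S + 1 := by positivity
  have ht_le : t * (1 + 2 * β) ≤ S + 1 := by nlinarith
  rw [xiStep, div_le_iff₀ (by positivity), div_mul_eq_mul_div, div_mul_eq_mul_div,
    le_div_iff₀ (by positivity)]
  refine le_of_mul_le_mul_right ?_ hS_pos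
  calc (-1 + S) * (1 + 2 * β) * (S + 1) = 4 * β ^ 2 * t * (t * (1 + 2 * β)) := by
        linear_combination (1 + 2 * β) * hS_sq
    _ ≤ 4 * β ^ 2 * t * (S + 1) := by gcongr
    _ = 2 * β * t * (2 * β) * (S + 1) := by ring

theorem xi_nonneg (hβ : 0 < β) : ∀ x, 0 ≤ xi β x
  | 0 => zero_le_one
  | x + 1 => xiStep_nonneg hβ.le (xi β x)

theorem xi_le_pow (hβ : 0 < β) (x : ℕ) : xi β x ≤ (2 * β / (1 + 2 * β)) ^ x := by
  have hr : 2 * β / (1 + 2 * β) ≤ 1 := (two_mul_div_one_add_two_mul_lt_one hβ.le).le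
  induction x with
  | zero => exact (pow_zero _).ge
  | succ x ih =>
    calc xi β (x + 1) = xiStep β (xi β x) := xi_succ β x
      _ ≤ 2 * β / (1 + 2 * β) * xi β x :=
          xiStep_le_mul hβ (xi_nonneg hβ x) (ih.trans (pow_le_one₀ (by positivity) hr))
      _ ≤ (2 * β / (1 + 2 * β)) ^ (x + 1) := by rw [pow_succ']; gcongr

theorem xi_antitone (hβ : 0 < β) : Antitone (xi β) := by
  refine antitone_nat_of_succ_le fun x => ?_
  have hr := two_mul_div_one_add_two_mul_lt_one hβ.le
  have hx₁ : xi β x ≤ 1 := (xi_le_pow hβ x).trans (pow_le_one₀ (by positivity) hr.le)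
  calc xi β (x + 1) = xiStep β (xi β x) := xi_succ β x
    _ ≤ 2 * β / (1 + 2 * β) * xi β x := xiStep_le_mul hβ (xi_nonneg hβ x) hx₁
    _ ≤ xi β x := mul_le_of_le_one_left (xi_nonneg hβ x) hr.le

end

/-- `ξ_β(x) → 0` as `x → ∞`, and consequently the differences
`π_β^P(x) = ξ_β(x) − ξ_β(x+1)` sum to `1`, so they define a probability
distribution on `ℕ`. -/
theorem xi_tendsto_zero_and_prob (β : ℝ) (hβ : 0 < β) :
    Filter.Tendsto (xi β) Filter.atTop (nhds 0) ∧
      HasSum (fun x : ℕ => xi β x - xi β (x + 1)) 1 := by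
  have htendsto : Filter.Tendsto (xi β) Filter.atTop (nhds 0) :=
    squeeze_zero (xi_nonneg hβ) (xi_le_pow hβ)
      (tendsto_pow_atTop_nhds_zero_of_lt_one (by positivity)
        (two_mul_div_one_add_two_mul_lt_one hβ.le))
  refine ⟨htendsto, ?_⟩
  simpa only [xi.eq_1, sub_zero] using hasSum_sub_succ_of_antitone (xi_antitone hβ) htendsto
end

section
/- Fix β > 0. The series ∑_{k=1}^∞ ξ_β(k) converges and equals β; equivalently, a random variable X̄_β^P with distribution π_β^P has finite mean equal to β. -/
open Filter Finset Topology

section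

variable {β : ℝ}

lemma xi_pos (hβ : 0 < β) : ∀ n, 0 < xi β n
  | 0 => one_pos
  | n + 1 => by
    have hsqrt : 1 < Real.sqrt (1 + 4 * β ^ 2 * xi β n ^ 2) := by
      rw [Real.lt_sqrt zero_le_one]
      nlinarith [mul_pos (pow_pos hβ 2) (pow_pos (xi_pos hβ n) 2)]
    exact div_pos (by linarith) (by positivity)

lemma two_mul_mul_xi_succ_add_one (hβ : 0 < β) (n : ℕ) :
    2 * β * xi β (n + 1) + 1 = Real.sqrt (1 + 4 * β ^ 2 * xi β n ^ 2) := by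
  rw [xi]
  field_simp
  ring

lemma xi_succ_eq (hβ : 0 < β) (n : ℕ) :
    xi β (n + 1) = β * (xi β n ^ 2 - xi β (n + 1) ^ 2) := by
  have hsq := Real.sq_sqrt (by positivity : 0 ≤ 1 + 4 * β ^ 2 * xi β n ^ 2)
  rw [← two_mul_mul_xi_succ_add_one hβ] at hsq
  apply mul_left_cancel₀ (by positivity : 4 * β ≠ 0)
  linear_combination hsq

lemma sum_range_xi_succ (hβ : 0 < β) (n : ℕ) :
    ∑ k ∈ range n, xi β (k + 1) = β * (1 - xi β n ^ 2) := by
  induction n with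
  | zero => simp [xi]
  | succ n ih =>
    rw [sum_range_succ, ih]
    linear_combination xi_succ_eq hβ n

end

/-- The series `∑_{k=1}^∞ ξ_β(k)` converges and equals `β`; equivalently a random
variable with distribution `π_β^P` has finite mean equal to `β`. -/
theorem xi_sum_eq_beta (β : ℝ) (hβ : 0 < β) :
    HasSum (fun k : ℕ => xi β (k + 1)) β := by
  have hnonneg : ∀ k, 0 ≤ xi β (k + 1) := fun k => (xi_pos hβ (k + 1)).le
  have hsummable : Summable (fun k : ℕ => xi β (k + 1)) :=
    summable_of_sum_range_le hnonneg fun n => by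
      rw [sum_range_xi_succ hβ]
      nlinarith [sq_nonneg (xi β n)]
  have hlim : Tendsto (xi β) atTop (𝓝 0) :=
    (tendsto_add_atTop_iff_nat 1).mp hsummable.tendsto_atTop_zero
  rw [hasSum_iff_tendsto_nat_of_nonneg hnonneg]
  simp_rw [sum_range_xi_succ hβ]
  simpa using ((hlim.pow 2).const_sub 1).const_mul β
end

section
/- Let f : ℝ → ℝ be a function with 0 ≤ f ≤ 1, f nonincreasing on [0, ∞), f(0) = 1, f integrable on [0, ∞), and suppose that f(x)² = ∫_x^∞ f(s) ds for every x ≥ 0. Then f(x) = max(2 − x, 0)/2 for every x ≥ 0. -/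
/-!
Differentiating `f x ^ 2 = ∫ s in Ioi x, f s` gives `2 f f' = -f`, so `f' = -1/2` wherever
`f > 0`. By uniqueness for this ODE, `f = 1 - x / 2` up to the first zero of `f`; that zero must
therefore be `x = 2`, and beyond it `f`, being antitone and nonnegative, vanishes.
-/

open MeasureTheory Set intervalIntegral

theorem hasDerivWithinAt_integral_Ioi {E : Type*} [NormedAddCommGroup E] [NormedSpace ℝ E]
    [CompleteSpace E] {f : ℝ → E} {a y : ℝ} (hf : IntegrableOn f (Ioi a)) (hay : a ≤ y)
    (hcont : ContinuousWithinAt f (Ici y) y) :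
    HasDerivWithinAt (fun x => ∫ s in Ioi x, f s) (-f y) (Ici y) y := by
  have hprimitive : HasDerivWithinAt (fun x => ∫ s in a..x, f s) (f y) (Ici y) y :=
    integral_hasDerivWithinAt_right (t := Ioi y)
      ((intervalIntegrable_iff_integrableOn_Ioc_of_le hay).2 (hf.mono_set Ioc_subset_Ioi_self))
      ⟨Ioi y, self_mem_nhdsWithin, (hf.mono_set (Ioi_subset_Ioi hay)).aestronglyMeasurable⟩
      (hcont.mono Ioi_subset_Ici_self)
  refine (hprimitive.const_sub (∫ s in Ioi a, f s)).congr (fun x hx => ?_) ?_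
  · rw [← integral_Ioi_sub_Ioi hf (hay.trans hx), sub_sub_cancel]
  · rw [← integral_Ioi_sub_Ioi hf hay, sub_sub_cancel]

section SqEqIntegralIoi

variable {f : ℝ → ℝ}

theorem continuousOn_of_sq_eq_integral_Ioi (hnonneg : ∀ x, 0 ≤ x → 0 ≤ f x)
    (hint : IntegrableOn f (Ioi 0)) (heq : ∀ x, 0 ≤ x → f x ^ 2 = ∫ s in Ioi x, f s) :
    ContinuousOn f (Ici 0) :=
  hint.continuousOn_Ici_primitive_Ioi.sqrt.congr fun x hx => by
    change f x = √(∫ s in Ioi x, f s)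
    rw [← heq x hx, Real.sqrt_sq (hnonneg x hx)]

theorem hasDerivWithinAt_of_sq_eq_integral_Ioi (hnonneg : ∀ x, 0 ≤ x → 0 ≤ f x)
    (hint : IntegrableOn f (Ioi 0)) (heq : ∀ x, 0 ≤ x → f x ^ 2 = ∫ s in Ioi x, f s)
    {y : ℝ} (hy : 0 ≤ y) (hfy : 0 < f y) :
    HasDerivWithinAt f (-(1 / 2)) (Ici y) y := by
  have hsqrt : ∀ x ∈ Ici y, √(∫ s in Ioi x, f s) = f x := fun x hx => by
    rw [← heq x (hy.trans hx), Real.sqrt_sq (hnonneg x (hy.trans hx))]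
  have htail := hasDerivWithinAt_integral_Ioi hint hy
    ((continuousOn_of_sq_eq_integral_Ioi hnonneg hint heq y hy).mono (Ici_subset_Ici.2 hy))
  have hderiv := (htail.sqrt (by rw [← heq y hy]; positivity)).congr
    (fun x hx => (hsqrt x hx).symm) (hsqrt y self_mem_Ici).symm
  rwa [hsqrt y self_mem_Ici, neg_div, div_mul_cancel_right₀ hfy.ne', ← one_div] at hderiv

theorem eqOn_Icc_of_sq_eq_integral_Ioi (hnonneg : ∀ x, 0 ≤ x → 0 ≤ f x) (h0 : f 0 = 1)
    (hint : IntegrableOn f (Ioi 0)) (heq : ∀ x, 0 ≤ x → f x ^ 2 = ∫ s in Ioi x, f s)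
    {a : ℝ} (hpos : ∀ y ∈ Ico 0 a, 0 < f y) :
    EqOn f (fun y => 1 - y / 2) (Icc 0 a) :=
  eq_of_has_deriv_right_eq
    (fun y hy => hasDerivWithinAt_of_sq_eq_integral_Ioi hnonneg hint heq hy.1 (hpos y hy))
    (fun y _ => (((hasDerivAt_id y).div_const 2).const_sub 1).hasDerivWithinAt)
    ((continuousOn_of_sq_eq_integral_Ioi hnonneg hint heq).mono Icc_subset_Ici_self)
    (by fun_prop) (by simp [h0])

theorem pos_of_sq_eq_integral_Ioi (hnonneg : ∀ x, 0 ≤ x → 0 ≤ f x) (h0 : f 0 = 1)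
    (hint : IntegrableOn f (Ioi 0)) (heq : ∀ x, 0 ≤ x → f x ^ 2 = ∫ s in Ioi x, f s)
    {x : ℝ} (hx : 0 ≤ x) (hx2 : x < 2) : 0 < f x := by
  by_contra! hfx
  set zeros := Icc 0 x ∩ f ⁻¹' {0}
  have hclosed : IsClosed zeros :=
    ((continuousOn_of_sq_eq_integral_Ioi hnonneg hint heq).mono Icc_subset_Ici_self
      |>.preimage_isClosed_of_isClosed isClosed_Icc isClosed_singleton)
  have hbdd : BddBelow zeros := ⟨0, fun y hy => hy.1.1⟩
  obtain ⟨⟨hz0, hzx⟩, hfz⟩ :=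
    hclosed.csInf_mem ⟨x, ⟨hx, le_rfl⟩, le_antisymm hfx (hnonneg x hx)⟩ hbdd
  have hpos : ∀ y ∈ Ico 0 (sInf zeros), 0 < f y := fun y hy =>
    (hnonneg y hy.1).lt_of_ne' fun hfy =>
      notMem_of_lt_csInf hy.2 hbdd ⟨⟨hy.1, hy.2.le.trans hzx⟩, hfy⟩
  have hlin := eqOn_Icc_of_sq_eq_integral_Ioi hnonneg h0 hint heq hpos ⟨hz0, le_rfl⟩
  simp only [mem_preimage, mem_singleton_iff] at hfz
  linarith

end SqEqIntegralIoi

/-- Functional-equation step of the high-load limit for the Power of Choice policy: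
if `f : ℝ → ℝ` satisfies `0 ≤ f ≤ 1`, is nonincreasing on `[0,∞)`, `f(0) = 1`,
is integrable on `[0,∞)`, and `f(x)² = ∫_x^∞ f(s) ds` for every `x ≥ 0`,
then `f(x) = max(2 − x, 0)/2` for every `x ≥ 0`: `f` is the tail function of the
uniform distribution on `[0,2]`. -/
theorem tail_functional_equation_unique (f : ℝ → ℝ)
    (hrange : ∀ x, 0 ≤ f x ∧ f x ≤ 1)
    (hmono : AntitoneOn f (Set.Ici 0))
    (h0 : f 0 = 1)
    (hint : IntegrableOn f (Set.Ici 0))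
    (heq : ∀ x : ℝ, 0 ≤ x → (f x) ^ 2 = ∫ s in Set.Ioi x, f s) :
    ∀ x : ℝ, 0 ≤ x → f x = max (2 - x) 0 / 2 := by
  have hnonneg : ∀ x, 0 ≤ x → 0 ≤ f x := fun x _ => (hrange x).1
  have hint_Ioi : IntegrableOn f (Ioi 0) := hint.mono_set Ioi_subset_Ici_self
  have hlin : EqOn f (fun y => 1 - y / 2) (Icc 0 2) :=
    eqOn_Icc_of_sq_eq_integral_Ioi hnonneg h0 hint_Ioi heq fun y hy =>
      pos_of_sq_eq_integral_Ioi hnonneg h0 hint_Ioi heq hy.1 hy.2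
  intro x hx
  rcases le_total x 2 with hx2 | hx2
  · rw [hlin ⟨hx, hx2⟩, max_eq_left (by linarith)]
    ring
  · have hf2 : f 2 = 0 := by norm_num [hlin ⟨zero_le_two, le_rfl⟩]
    rw [max_eq_right (by linarith), zero_div]
    exact le_antisymm ((hmono (show (0 : ℝ) ≤ 2 by norm_num) hx hx2).trans_eq hf2) (hnonneg x hx)
end

section
/- Let μ be a probability measure on ℝ with μ([0, ∞)) = 1 and finite second moment ∫ y² dμ(y) < ∞, and suppose that for every x ≥ 0 one has (μ([x, ∞)))² = ∫ max(y − x, 0) dμ(y). Then μ is the uniform distribution on [0, 2], i.e. μ equals (1/2) times Lebesgue measure restricted to [0, 2]. -/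
open MeasureTheory Set

namespace UniqueUniformAux

noncomputable def G (μ : Measure ℝ) (x : ℝ) : ℝ := (μ (Set.Ici x)).toReal

variable {μ : Measure ℝ} [IsProbabilityMeasure μ]

lemma G_nonneg (x : ℝ) : 0 ≤ G μ x := ENNReal.toReal_nonneg

lemma G_le_one (x : ℝ) : G μ x ≤ 1 := by
  have h : μ (Set.Ici x) ≤ 1 := prob_le_one
  simpa [G] using ENNReal.toReal_mono (by simp) h

lemma G_anti : Antitone (G μ) := fun a b hab =>
  ENNReal.toReal_mono (measure_ne_top _ _) (measure_mono (Set.Ici_subset_Ici.2 hab))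

lemma int_id (hmom : Integrable (fun y : ℝ => y ^ 2) μ) :
    Integrable (fun y : ℝ => y) μ := by
  have hg : Integrable (fun y : ℝ => (y ^ 2 + 1) / 2) μ :=
    (hmom.add (integrable_const 1)).div_const 2
  refine hg.mono (measurable_id.aestronglyMeasurable) ?_
  filter_upwards with y
  simp only [Real.norm_eq_abs]
  rw [abs_of_nonneg (by positivity : (0:ℝ) ≤ (y ^ 2 + 1) / 2)]
  nlinarith [sq_nonneg (|y| - 1), sq_abs y]

lemma int_max (hmom : Integrable (fun y : ℝ => y ^ 2) μ) (x : ℝ) :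
    Integrable (fun y : ℝ => max (y - x) 0) μ := by
  have h : Integrable (fun y : ℝ => y - x) μ := (int_id hmom).sub (integrable_const x)
  exact h.sup (integrable_const 0)

/-- Key difference bounds for `F x = ∫ (y-x)⁺`. -/
lemma F_diff_bounds (hmom : Integrable (fun y : ℝ => y ^ 2) μ) {x x' : ℝ} (h : x ≤ x') :
    (x' - x) * G μ x' ≤ (∫ y, max (y - x) 0 ∂μ) - ∫ y, max (y - x') 0 ∂μ ∧
      (∫ y, max (y - x) 0 ∂μ) - ∫ y, max (y - x') 0 ∂μ ≤ (x' - x) * G μ x := by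
  have hix := int_max hmom x
  have hix' := int_max hmom x'
  rw [← integral_sub hix hix']
  constructor
  · have hmono : ∀ y : ℝ, (Set.Ici x').indicator (fun _ => x' - x) y ≤
        max (y - x) 0 - max (y - x') 0 := by
      intro y
      rcases le_or_gt x' y with hy | hy
      · rw [Set.indicator_of_mem (Set.mem_Ici.mpr hy)]
        rw [max_eq_left (by linarith), max_eq_left (by linarith)]
        ring_nf; linarith
      · rw [Set.indicator_of_notMem (fun hmem => absurd (Set.mem_Ici.mp hmem) (not_le.mpr hy))]
        rw [max_eq_right (by linarith : y - x' ≤ 0)]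
        simp
    have := integral_mono ((integrable_const (x' - x)).indicator measurableSet_Ici)
      (hix.sub hix') hmono
    rwa [integral_indicator_const _ measurableSet_Ici, smul_eq_mul, mul_comm] at this
  · have hmono : ∀ y : ℝ, max (y - x) 0 - max (y - x') 0 ≤
        (Set.Ici x).indicator (fun _ => x' - x) y := by
      intro y
      rcases le_or_gt x y with hy | hy
      · rw [Set.indicator_of_mem (Set.mem_Ici.mpr hy)]
        have h1 : y - x' ≤ max (y - x') 0 := le_max_left _ _
        rw [max_eq_left (by linarith)]
        linarith
      · rw [Set.indicator_of_notMem (fun hmem => absurd (Set.mem_Ici.mp hmem) (not_le.mpr hy))]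
        rw [max_eq_right (by linarith : y - x ≤ 0),
          max_eq_right (by linarith : y - x' ≤ 0)]
        simp
    have := integral_mono (hix.sub hix')
      ((integrable_const (x' - x)).indicator measurableSet_Ici) hmono
    rwa [integral_indicator_const _ measurableSet_Ici, smul_eq_mul, mul_comm] at this

/-- Hölder-1/2 bound for `G`. -/
lemma G_sq_diff (hmom : Integrable (fun y : ℝ => y ^ 2) μ)
    (heq : ∀ x : ℝ, 0 ≤ x → ((μ (Set.Ici x)).toReal) ^ 2 = ∫ y, max (y - x) 0 ∂μ)
    {x x' : ℝ} (h0 : 0 ≤ x) (h : x ≤ x') :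
    (G μ x - G μ x') ^ 2 ≤ x' - x := by
  have hb := (F_diff_bounds hmom h).2
  have hx : (G μ x) ^ 2 = ∫ y, max (y - x) 0 ∂μ := heq x h0
  have hx' : (G μ x') ^ 2 = ∫ y, max (y - x') 0 ∂μ := heq x' (h0.trans h)
  have hdiff : (G μ x) ^ 2 - (G μ x') ^ 2 ≤ (x' - x) * G μ x := by rw [hx, hx']; exact hb
  nlinarith [G_nonneg (μ := μ) x, G_nonneg (μ := μ) x', G_le_one (μ := μ) x,
    G_anti (μ := μ) h]

lemma G_contOn (hmom : Integrable (fun y : ℝ => y ^ 2) μ)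
    (heq : ∀ x : ℝ, 0 ≤ x → ((μ (Set.Ici x)).toReal) ^ 2 = ∫ y, max (y - x) 0 ∂μ) :
    ContinuousOn (G μ) (Set.Ici 0) := by
  intro x hx
  rw [Metric.continuousWithinAt_iff]
  intro ε hε
  refine ⟨ε ^ 2, by positivity, ?_⟩
  intro y hy hdist
  rw [Real.dist_eq] at hdist ⊢
  have key : (G μ y - G μ x) ^ 2 < ε ^ 2 := by
    rcases le_total x y with h | h
    · have := G_sq_diff hmom heq hx h
      have : (G μ y - G μ x) ^ 2 ≤ y - x := by nlinarith
      calc (G μ y - G μ x) ^ 2 ≤ y - x := this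
        _ ≤ |y - x| := le_abs_self _
        _ < ε ^ 2 := hdist
    · have := G_sq_diff hmom heq hy h
      calc (G μ y - G μ x) ^ 2 ≤ x - y := by nlinarith
        _ ≤ |y - x| := by rw [abs_sub_comm]; exact le_abs_self _
        _ < ε ^ 2 := hdist
  have := abs_le_of_sq_le_sq key.le hε.le
  rcases lt_or_eq_of_le this with h | h
  · exact h
  · nlinarith [sq_abs (G μ y - G μ x)]

/-- Right derivative of `F` at `x ≥ 0` equals `-G x`. -/
lemma F_rderiv (hmom : Integrable (fun y : ℝ => y ^ 2) μ)
    (heq : ∀ x : ℝ, 0 ≤ x → ((μ (Set.Ici x)).toReal) ^ 2 = ∫ y, max (y - x) 0 ∂μ) {x : ℝ} (hx : 0 ≤ x) :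
    HasDerivWithinAt (fun t => ∫ y, max (y - t) 0 ∂μ) (-(G μ x)) (Set.Ici x) x := by
  rw [hasDerivWithinAt_iff_tendsto_slope]
  rw [Metric.tendsto_nhdsWithin_nhds]
  intro ε hε
  refine ⟨ε ^ 2, by positivity, ?_⟩
  intro y hy hdist
  obtain ⟨hy1, hy2⟩ := hy
  have hxy : x < y := lt_of_le_of_ne hy1 (Ne.symm (by simpa using hy2))
  have hpos : 0 < y - x := by linarith
  obtain ⟨hl, hu⟩ := F_diff_bounds (μ := μ) hmom hxy.le
  rw [slope_def_field, Real.dist_eq]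
  set Fx := ∫ y', max (y' - x) 0 ∂μ
  set Fy := ∫ y', max (y' - y) 0 ∂μ
  have hslope_le : (Fy - Fx) / (y - x) ≤ -(G μ y) := by
    rw [div_le_iff₀ hpos]; nlinarith
  have hslope_ge : -(G μ x) ≤ (Fy - Fx) / (y - x) := by
    rw [le_div_iff₀ hpos]; nlinarith
  have hGdiff : G μ x - G μ y < ε := by
    have h1 : (G μ x - G μ y) ^ 2 ≤ y - x := G_sq_diff hmom heq hx hxy.le
    have h2 : y - x < ε ^ 2 := by
      have : |y - x| < ε ^ 2 := by rwa [Real.dist_eq] at hdist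
      nlinarith [le_abs_self (y - x)]
    have h3 : (G μ x - G μ y) ^ 2 < ε ^ 2 := by linarith
    have h4 := abs_le_of_sq_le_sq h3.le hε.le
    have h5 : 0 ≤ G μ x - G μ y := by linarith [G_anti (μ := μ) hxy.le]
    rcases lt_or_eq_of_le h4 with h | h
    · calc G μ x - G μ y ≤ |G μ x - G μ y| := le_abs_self _
        _ < ε := h
    · nlinarith [sq_abs (G μ x - G μ y)]
  rw [abs_lt]
  constructor
  · have := G_nonneg (μ := μ) y
    linarith
  · linarith

lemma G_rderiv (hmom : Integrable (fun y : ℝ => y ^ 2) μ)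
    (heq : ∀ x : ℝ, 0 ≤ x → ((μ (Set.Ici x)).toReal) ^ 2 = ∫ y, max (y - x) 0 ∂μ) {x : ℝ} (hx : 0 ≤ x)
    (hGx : 0 < G μ x) : HasDerivWithinAt (G μ) (-(1 / 2)) (Set.Ici x) x := by
  have hF := F_rderiv (μ := μ) hmom heq hx
  have hFx : (∫ y, max (y - x) 0 ∂μ) = G μ x ^ 2 := (heq x hx).symm
  have hne : (∫ y, max (y - x) 0 ∂μ) ≠ 0 := by rw [hFx]; positivity
  have hsq : HasDerivWithinAt (fun t => Real.sqrt (∫ y, max (y - t) 0 ∂μ))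
      (1 / (2 * Real.sqrt (∫ y, max (y - x) 0 ∂μ)) * (-(G μ x))) (Set.Ici x) x :=
    (Real.hasDerivAt_sqrt hne).comp_hasDerivWithinAt x hF
  have hcongr : ∀ t ∈ Set.Ici x, G μ t = Real.sqrt (∫ y, max (y - t) 0 ∂μ) := by
    intro t ht
    rw [← heq t (hx.trans ht)]
    exact (Real.sqrt_sq (G_nonneg (μ := μ) t)).symm
  have := hsq.congr hcongr (hcongr x Set.self_mem_Ici)
  refine this.congr_deriv ?_
  rw [hFx, Real.sqrt_sq hGx.le]
  field_simp

/-- Main ODE consequence: as long as `G > 0` on `[0,b)`, `G x = 1 - x/2` on `[0,b]`. -/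
lemma G_eq_on (hsupp : μ (Set.Ici (0 : ℝ)) = 1)
    (hmom : Integrable (fun y : ℝ => y ^ 2) μ)
    (heq : ∀ x : ℝ, 0 ≤ x → ((μ (Set.Ici x)).toReal) ^ 2 = ∫ y, max (y - x) 0 ∂μ)
    {b : ℝ} (hb : 0 ≤ b)
    (hpos : ∀ x ∈ Set.Ico (0:ℝ) b, 0 < G μ x) :
    ∀ x ∈ Set.Icc (0:ℝ) b, G μ x = 1 - x / 2 := by
  have hG0 : G μ 0 = 1 := by simp [G, hsupp]
  have hcont : ContinuousOn (fun x => G μ x + x / 2) (Set.Icc 0 b) :=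
    ((G_contOn hmom heq).mono Set.Icc_subset_Ici_self).add
      ((continuous_id.div_const 2).continuousOn)
  have hderiv : ∀ x ∈ Set.Ico (0:ℝ) b,
      HasDerivWithinAt (fun x => G μ x + x / 2) 0 (Set.Ici x) x := by
    intro x hx
    have h1 := G_rderiv (μ := μ) hmom heq hx.1 (hpos x hx)
    have h2 : HasDerivWithinAt (fun x : ℝ => x / 2) (1 / 2) (Set.Ici x) x :=
      ((hasDerivAt_id x).div_const 2).hasDerivWithinAt
    have := h1.add h2
    exact this.congr_deriv (by norm_num)
  have key := constant_of_has_deriv_right_zero hcont hderiv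
  intro x hx
  have := key x hx
  simp only [hG0] at this
  linarith [this]

end UniqueUniformAux

open UniqueUniformAux

/-- Characterization of the uniform distribution on `[0,2]`: if `μ` is a probability
measure on `ℝ` carried by `[0,∞)` with finite second moment, satisfying
`μ([x,∞))² = ∫ (y − x)⁺ dμ(y)` for every `x ≥ 0`, then `μ` is the uniform
distribution on `[0,2]`, i.e. `(1/2)` times Lebesgue measure restricted to `[0,2]`. -/
theorem measure_functional_equation_unique (μ : Measure ℝ) [IsProbabilityMeasure μ]
    (hsupp : μ (Set.Ici (0 : ℝ)) = 1)
    (hmom : Integrable (fun y : ℝ => y ^ 2) μ)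
    (heq : ∀ x : ℝ, 0 ≤ x → ((μ (Set.Ici x)).toReal) ^ 2 = ∫ y, max (y - x) 0 ∂μ) :
    μ = (1 / 2 : ENNReal) • volume.restrict (Set.Icc (0 : ℝ) 2) := by
  have hG0 : G μ 0 = 1 := by simp [G, hsupp]
  -- Step 1: G vanishes somewhere on [0,3)
  have hnot : ¬ ∀ x ∈ Set.Ico (0:ℝ) 3, 0 < G μ x := by
    intro h
    have h3 := G_eq_on hsupp hmom heq (by norm_num) h (5/2) (by norm_num)
    have := G_nonneg (μ := μ) (5/2)
    rw [h3] at this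
    norm_num at this
  push_neg at hnot
  obtain ⟨c, hc, hc0⟩ := hnot
  have hGc : G μ c = 0 := le_antisymm hc0 (G_nonneg c)
  -- Step 2: T := sInf of the zero set; show T = 2
  set S : Set ℝ := {x : ℝ | 0 ≤ x ∧ G μ x = 0} with hS
  have hSne : S.Nonempty := ⟨c, hc.1, hGc⟩
  have hSbdd : BddBelow S := ⟨0, fun x hx => hx.1⟩
  have hSclosed : IsClosed S := by
    have : S = Set.Ici (0:ℝ) ∩ (G μ) ⁻¹' {0} := by
      ext x; simp [hS, Set.mem_setOf_eq]
    rw [this]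
    exact ContinuousOn.preimage_isClosed_of_isClosed (G_contOn hmom heq)
      isClosed_Ici isClosed_singleton
  set T := sInf S with hT
  have hTmem : T ∈ S := hSclosed.csInf_mem hSne hSbdd
  have hT0 : 0 ≤ T := hTmem.1
  have hGT : G μ T = 0 := hTmem.2
  have hpos : ∀ x ∈ Set.Ico (0:ℝ) T, 0 < G μ x := by
    intro x hx
    rcases (G_nonneg (μ := μ) x).lt_or_eq with h | h
    · exact h
    · exact absurd (csInf_le hSbdd ⟨hx.1, h.symm⟩) (not_le.2 hx.2)
  have hGeq := G_eq_on hsupp hmom heq hT0 hpos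
  have hT2 : T = 2 := by
    have := hGeq T ⟨hT0, le_refl T⟩
    rw [hGT] at this
    linarith
  rw [hT2] at hGeq
  have hGzero : ∀ x : ℝ, 2 ≤ x → G μ x = 0 := by
    intro x hx
    have h1 : G μ x ≤ G μ 2 := G_anti (μ := μ) hx
    have h2 : G μ 2 = 0 := by rw [hT2] at hGT; exact hGT
    exact le_antisymm (h2 ▸ h1) (G_nonneg x)
  -- Step 3: measures agree on Ici
  set ν : Measure ℝ := (1 / 2 : ENNReal) • volume.restrict (Set.Icc (0 : ℝ) 2) with hν
  have hνIci : ∀ a : ℝ, 0 ≤ a → ν (Set.Ici a) = ENNReal.ofReal ((2 - a) / 2) := by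
    intro a ha
    rw [hν, Measure.smul_apply, smul_eq_mul,
      Measure.restrict_apply measurableSet_Ici]
    have hint : Set.Ici a ∩ Set.Icc (0:ℝ) 2 = Set.Icc a 2 := by
      ext t
      simp only [Set.mem_inter_iff, Set.mem_Ici, Set.mem_Icc]
      exact ⟨fun ⟨h1, _, h3⟩ => ⟨h1, h3⟩, fun ⟨h1, h2⟩ => ⟨h1, ha.trans h1, h2⟩⟩
    rw [hint, Real.volume_Icc]
    rw [show ((2:ℝ) - a) / 2 = (1/2) * (2 - a) by ring,
      ENNReal.ofReal_mul (by norm_num),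
      show ENNReal.ofReal (1/2 : ℝ) = 2⁻¹ by
        rw [ENNReal.ofReal_div_of_pos (by norm_num), ENNReal.ofReal_one,
          ENNReal.ofReal_ofNat, one_div], ← one_div]
  refine Measure.ext_of_Ici μ ν (fun a => ?_)
  rcases le_or_gt a 0 with ha | ha
  · have h1 : μ (Set.Ici a) = 1 := by
      refine le_antisymm prob_le_one ?_
      calc (1 : ENNReal) = μ (Set.Ici 0) := hsupp.symm
        _ ≤ μ (Set.Ici a) := measure_mono (Set.Ici_subset_Ici.2 ha)
    have h2 : ν (Set.Ici a) = 1 := by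
      have hsub : Set.Icc (0:ℝ) 2 ⊆ Set.Ici a := fun x hx => le_trans ha hx.1
      rw [hν, Measure.smul_apply, smul_eq_mul,
        Measure.restrict_apply measurableSet_Ici,
        Set.inter_eq_self_of_subset_right hsub, Real.volume_Icc]
      norm_num
      exact ENNReal.inv_mul_cancel (by norm_num) (by norm_num)
    rw [h1, h2]
  · have hμa : μ (Set.Ici a) = ENNReal.ofReal (G μ a) :=
      (ENNReal.ofReal_toReal (measure_ne_top μ _)).symm
    rcases le_total a 2 with ha2 | ha2
    · rw [hνIci a ha.le, hμa, hGeq a ⟨ha.le, ha2⟩]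
      congr 1
      ring
    · rw [hνIci a (by linarith), hμa, hGzero a ha2]
      rw [ENNReal.ofReal_eq_zero.2 (by linarith : ((2:ℝ) - a)/2 ≤ 0)]
      simp
end
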